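/- Let z be a nonzero Gaussian integer, u a unit of ℤ[i], and v a Gaussian integer. Let r be the unique remainder of v modulo z lying in 𝓕(z), and let r' be the unique remainder of v modulo uz lying in 𝓕(uz). If r ∈ 𝓕°(z), then r' = r. -/

import Mathlib

/-!
Write `r = z q` and `r' = u z q'` with `q` in the open and `q'` in the half-open square of
half-width `1/2`. Since `z ∣ u z`, `z` divides `r' - r`, and the quotient `k = u q' - q` is a
Gaussian integer. Multiplying by a unit permutes the coordinates up to sign, so both
coordinates of `u q'` are at most `1/2` in absolute value while those of `q` are strictly
smaller; thus both coordinates of `k` lie in `(-1, 1)`, forcing `k = 0`.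
-/

/-- The fundamental domain `𝓕(z)` of a Gaussian integer `z`:
the semi-open square `{ z(α + βi) : -1/2 < α ≤ 1/2, -1/2 < β ≤ 1/2 }` in `ℂ`. -/
def Fd (z : GaussianInt) : Set ℂ :=
  { w | ∃ α β : ℝ, w = (GaussianInt.toComplex z) * (α + β * Complex.I) ∧
      -(1/2 : ℝ) < α ∧ α ≤ 1/2 ∧ -(1/2 : ℝ) < β ∧ β ≤ 1/2 }

/-- The strict fundamental domain `𝓕°(z)` of a Gaussian integer `z`:
the open square `{ z(α + βi) : -1/2 < α < 1/2, -1/2 < β < 1/2 }` in `ℂ`. -/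
def FdO (z : GaussianInt) : Set ℂ :=
  { w | ∃ α β : ℝ, w = (GaussianInt.toComplex z) * (α + β * Complex.I) ∧
      -(1/2 : ℝ) < α ∧ α < 1/2 ∧ -(1/2 : ℝ) < β ∧ β < 1/2 }

lemma Complex.max_abs_re_im_sub_le (a b : ℂ) :
    max |(a - b).re| |(a - b).im| ≤ max |a.re| |a.im| + max |b.re| |b.im| := by
  rw [sub_re, sub_im]
  exact max_le ((abs_sub _ _).trans (add_le_add (le_max_left _ _) (le_max_left _ _)))
    ((abs_sub _ _).trans (add_le_add (le_max_right _ _) (le_max_right _ _)))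

namespace GaussianInt

open Complex

lemma toComplex_eq_one_or_eq_neg_one_or_eq_I_or_eq_neg_I {u : GaussianInt} (hu : IsUnit u) :
    (u : ℂ) = 1 ∨ (u : ℂ) = -1 ∨ (u : ℂ) = I ∨ (u : ℂ) = -I := by
  have hnorm : u.re * u.re + u.im * u.im = 1 := by
    simpa [Zsqrtd.norm] using (Zsqrtd.norm_eq_one_iff' (by norm_num) u).2 hu
  have hre : |u.re| ≤ 1 := abs_le_one_iff_mul_self_le_one.2 (by nlinarith [mul_self_nonneg u.im])
  have him : |u.im| ≤ 1 := abs_le_one_iff_mul_self_le_one.2 (by nlinarith [mul_self_nonneg u.re])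
  rcases Int.abs_le_one_iff.1 hre with h | h | h <;>
    rcases Int.abs_le_one_iff.1 him with h' | h' | h' <;>
    simp only [h, h'] at hnorm <;> first | omega | simp [toComplex_def, h, h']

lemma max_abs_re_im_unit_mul {u : GaussianInt} (hu : IsUnit u) (q : ℂ) :
    max |(u * q).re| |(u * q).im| = max |q.re| |q.im| := by
  rcases toComplex_eq_one_or_eq_neg_one_or_eq_I_or_eq_neg_I hu with h | h | h | h <;>
    simp [h, max_comm]

lemma eq_zero_of_max_abs_re_im_lt_one {k : GaussianInt} (hk : max |(k : ℂ).re| |(k : ℂ).im| < 1) :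
    k = 0 := by
  rw [← intCast_re, ← intCast_im, max_lt_iff] at hk
  obtain ⟨hre, him⟩ := hk
  exact Zsqrtd.ext (Int.abs_lt_one_iff.1 (by exact_mod_cast hre))
    (Int.abs_lt_one_iff.1 (by exact_mod_cast him))

end GaussianInt

lemma exists_eq_mul_of_mem_Fd {z : GaussianInt} {w : ℂ} (hw : w ∈ Fd z) :
    ∃ q : ℂ, w = z * q ∧ max |q.re| |q.im| ≤ 1 / 2 := by
  obtain ⟨α, β, rfl, hα, hα', hβ, hβ'⟩ := hw
  refine ⟨α + β * Complex.I, rfl, max_le ?_ ?_⟩ <;>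
    simpa using abs_le.2 ⟨by linarith, by linarith⟩

lemma exists_eq_mul_of_mem_FdO {z : GaussianInt} {w : ℂ} (hw : w ∈ FdO z) :
    ∃ q : ℂ, w = z * q ∧ max |q.re| |q.im| < 1 / 2 := by
  obtain ⟨α, β, rfl, hα, hα', hβ, hβ'⟩ := hw
  refine ⟨α + β * Complex.I, rfl, max_lt ?_ ?_⟩ <;>
    simpa using abs_lt.2 ⟨by linarith, by linarith⟩

theorem mod_unit_mul_eq_general (z u v r r' : GaussianInt) (hz : z ≠ 0) (hu : IsUnit u)
    (hdvd : z ∣ v - r)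
    (hr' : GaussianInt.toComplex r' ∈ Fd (u * z)) (hdvd' : u * z ∣ v - r')
    (hro : GaussianInt.toComplex r ∈ FdO z) :
    r' = r := by
  obtain ⟨q', hq', hq'_le⟩ := exists_eq_mul_of_mem_Fd hr'
  obtain ⟨q, hq, hq_lt⟩ := exists_eq_mul_of_mem_FdO hro
  obtain ⟨k, hk⟩ : z ∣ r' - r := by
    simpa using dvd_sub hdvd ((dvd_mul_left z u).trans hdvd')
  have hkq : (k : ℂ) = u * q' - q := by
    refine mul_left_cancel₀ (GaussianInt.toComplex_eq_zero.not.2 hz) ?_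
    rw [← map_mul, ← hk, map_sub, hq', hq, map_mul]
    ring
  rw [← GaussianInt.max_abs_re_im_unit_mul hu] at hq'_le
  have hk0 : k = 0 := GaussianInt.eq_zero_of_max_abs_re_im_lt_one <| by
    rw [hkq]
    linarith [Complex.max_abs_re_im_sub_le (u * q') q]
  rwa [hk0, mul_zero, sub_eq_zero] at hk

/-- If the remainder `r` of `v` modulo `z` lying in `𝓕(z)` in fact lies in the strict
fundamental domain `𝓕°(z)`, then the remainder `r'` of `v` modulo `u * z` lying in
`𝓕(u * z)` (for `u` a unit) equals `r`. -/
theorem mod_unit_mul_eq (z u v r r' : GaussianInt) (hz : z ≠ 0) (hu : IsUnit u)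
    (hr : GaussianInt.toComplex r ∈ Fd z) (hdvd : z ∣ v - r)
    (hr' : GaussianInt.toComplex r' ∈ Fd (u * z)) (hdvd' : u * z ∣ v - r')
    (hro : GaussianInt.toComplex r ∈ FdO z) :
    r' = r :=
  mod_unit_mul_eq_general z u v r r' hz hu hdvd hr' hdvd' hro
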